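/- arXiv:2605.11911 — 2 statements merged into one kernel-verified Lean document; each statement's English description precedes it below -/
import Mathlib

section
/- Suppose activities x_0 = x, x_1, …, x_{L−1}, x_L = y of a deep linear network satisfy the equilibrium relations ε_l = W_{L:l+1}ᵀ ε_L for all l = 1, …, L, where ε_l = x_l − W_l x_{l−1}. Then the PC energy at these activities equals E = ∑_{l=1}^{L} (1/2)‖ε_l‖² = (1/2) ε_Lᵀ S ε_L = (1/2) rᵀ S⁻¹ r, where r = y − W_{L:1} x. -/
open Matrix
private lemma sum_mulVec' {ι : Type*} {m k : ℕ} (s : Finset ι)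
    (f : ι → Matrix (Fin m) (Fin k) ℝ) (v : Fin k → ℝ) :
    (∑ i ∈ s, f i) *ᵥ v = ∑ i ∈ s, f i *ᵥ v := by
  induction s using Finset.cons_induction with
  | empty => simp [Matrix.zero_mulVec]
  | cons a s h ih => simp [Finset.sum_cons, Matrix.add_mulVec, ih]

private lemma dotProduct_sum' {ι : Type*} {m : ℕ} (s : Finset ι)
    (v : Fin m → ℝ) (w : ι → Fin m → ℝ) :
    v ⬝ᵥ (∑ i ∈ s, w i) = ∑ i ∈ s, v ⬝ᵥ w i := by
  induction s using Finset.cons_induction with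
  | empty => simp
  | cons a s h ih => simp [Finset.sum_cons, dotProduct_add, ih]

/-- If the activities `x_0 = x, …, x_L = y` of a deep linear network
satisfy the equilibrium relations `ε_l = W_{L:l+1}ᵀ ε_L` for all `l = 1, …, L`
(where `ε_l = x_l − W_l x_{l−1}`), then the PC energy at these activities equals
`E = ∑_{l=1}^L (1/2)‖ε_l‖² = (1/2) ε_Lᵀ S ε_L = (1/2) rᵀ S⁻¹ r`, where
`r = y − W_{L:1} x` and `S = ∑_{l=1}^L W_{L:l+1} W_{L:l+1}ᵀ`.
Here `a` is the family of activities and `P l = W_{L:l+1}` are the partial products. -/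
theorem stmt5
    (L : ℕ) (hL : 1 ≤ L) (n : ℕ → ℕ)
    (W : ∀ k : ℕ, Matrix (Fin (n k)) (Fin (n (k - 1))) ℝ)
    (P : ∀ k : ℕ, Matrix (Fin (n L)) (Fin (n k)) ℝ)
    (hPL : P L = 1)
    (hP : ∀ k : ℕ, k < L → P k = P (k + 1) * W (k + 1))
    (x : Fin (n 0) → ℝ) (y : Fin (n L) → ℝ)
    (a : ∀ k : ℕ, Fin (n k) → ℝ) (ha0 : a 0 = x) (haL : a L = y)
    (heq : ∀ l : ℕ, 1 ≤ l → l ≤ L →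
      a l - W l *ᵥ a (l - 1) = (P l)ᵀ *ᵥ (a L - W L *ᵥ a (L - 1))) :
    (∑ l ∈ Finset.Icc 1 L, (1 / 2 : ℝ) *
        ((a l - W l *ᵥ a (l - 1)) ⬝ᵥ (a l - W l *ᵥ a (l - 1))) =
      (1 / 2 : ℝ) * ((a L - W L *ᵥ a (L - 1)) ⬝ᵥ
        ((∑ l ∈ Finset.Icc 1 L, P l * (P l)ᵀ) *ᵥ (a L - W L *ᵥ a (L - 1))))) ∧
    (∑ l ∈ Finset.Icc 1 L, (1 / 2 : ℝ) *
        ((a l - W l *ᵥ a (l - 1)) ⬝ᵥ (a l - W l *ᵥ a (l - 1))) =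
      (1 / 2 : ℝ) * ((y - P 0 *ᵥ x) ⬝ᵥ
        ((∑ l ∈ Finset.Icc 1 L, P l * (P l)ᵀ)⁻¹ *ᵥ (y - P 0 *ᵥ x)))) := by
  set ε : Fin (n L) → ℝ := a L - W L *ᵥ a (L - 1) with hε
  set S : Matrix (Fin (n L)) (Fin (n L)) ℝ := ∑ l ∈ Finset.Icc 1 L, P l * (P l)ᵀ with hS
  have hterm : ∀ l ∈ Finset.Icc 1 L,
      (a l - W l *ᵥ a (l - 1)) ⬝ᵥ (a l - W l *ᵥ a (l - 1)) = ε ⬝ᵥ ((P l * (P l)ᵀ) *ᵥ ε) := by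
    intro l hl
    rw [Finset.mem_Icc] at hl
    rw [heq l hl.1 hl.2, ← Matrix.mulVec_mulVec, Matrix.dotProduct_mulVec,
      ← Matrix.mulVec_transpose, Matrix.transpose_transpose, dotProduct_comm]
  have hfirst : ∑ l ∈ Finset.Icc 1 L, (1 / 2 : ℝ) *
      ((a l - W l *ᵥ a (l - 1)) ⬝ᵥ (a l - W l *ᵥ a (l - 1))) =
      (1 / 2 : ℝ) * (ε ⬝ᵥ (S *ᵥ ε)) := by
    rw [hS, sum_mulVec', dotProduct_sum', Finset.mul_sum]
    exact Finset.sum_congr rfl fun l hl => by rw [hterm l hl]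
  have htel : y - P 0 *ᵥ x = S *ᵥ ε := by
    have h1 : ∀ l ∈ Finset.Icc 1 L,
        (P l * (P l)ᵀ) *ᵥ ε = P l *ᵥ a l - P (l - 1) *ᵥ a (l - 1) := by
      intro l hl
      rw [Finset.mem_Icc] at hl
      obtain ⟨m, rfl⟩ : ∃ m, l = m + 1 := ⟨l - 1, (Nat.succ_pred_eq_of_pos hl.1).symm⟩
      have hPl : P (m + 1 - 1) = P (m + 1) * W (m + 1) := by
        simpa using hP m (lt_of_lt_of_le (Nat.lt_succ_self m) hl.2)
      rw [← Matrix.mulVec_mulVec, ← heq (m + 1) hl.1 hl.2, Matrix.mulVec_sub, hPl,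
        ← Matrix.mulVec_mulVec]
    rw [hS, sum_mulVec', Finset.sum_congr rfl h1]
    have h2 : ∑ l ∈ Finset.Icc 1 L, (P l *ᵥ a l - P (l - 1) *ᵥ a (l - 1))
        = P L *ᵥ a L - P 0 *ᵥ a 0 := by
      have he : Finset.Icc 1 L = Finset.Ico 1 (L + 1) := by rw [Finset.Ico_add_one_right_eq_Icc]
      rw [he, Finset.sum_Ico_eq_sum_range]
      refine (Finset.sum_congr rfl fun i _ => ?_).trans
        (Finset.sum_range_sub (fun i => P i *ᵥ a i) L)
      have h : 1 + i = i + 1 := Nat.add_comm 1 i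
      rw [h]
      simp
    rw [h2, haL, ha0, hPL, Matrix.one_mulVec]
  have hSpd : S.PosDef := by
    have hmem : L ∈ Finset.Icc 1 L := by simp [hL]
    rw [hS, ← Finset.add_sum_erase _ _ hmem, hPL]
    have hone : (1 : Matrix (Fin (n L)) (Fin (n L)) ℝ) *
        (1 : Matrix (Fin (n L)) (Fin (n L)) ℝ)ᵀ = 1 := by simp
    rw [hone]
    refine Matrix.PosDef.add_posSemidef Matrix.PosDef.one ?_
    refine Finset.sum_induction _ _ (fun A B hA hB => hA.add hB) Matrix.PosSemidef.zero ?_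
    intro l _
    have ht : (P l)ᵀ = (P l)ᴴ := by ext i j; simp [Matrix.conjTranspose_apply]
    rw [ht]
    exact Matrix.posSemidef_self_mul_conjTranspose _
  have hdet : IsUnit S.det := isUnit_iff_ne_zero.mpr hSpd.det_pos.ne'
  refine ⟨hfirst, ?_⟩
  rw [hfirst, htel]
  conv_rhs => rw [Matrix.mulVec_mulVec, Matrix.nonsing_inv_mul S hdet, Matrix.one_mulVec]
  rw [dotProduct_comm]
end

section
/- (Perfect alignment for ResNets with adaptive learning rates.) Suppose each weight matrix W_l(t) of a linear residual network evolves as dW_l/dt = α_l W̃_{L−1:l+1}ᵀ S̃⁻¹ r x*_lᵀ with layer-specific learning rates α_l = (x*_lᵀ x̂_{l−1})⁻¹, where x*_lᵀ x̂_{l−1} ≠ 0 for every l = 1, …, L−1. Then the change in the model prediction is exactly the output residual: dŷ/dt = r. -/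
/-!
Write `A_l = 1 + W_l`, so that `ŷ = P_0 x` with `P_l = A_{L-1} ⋯ A_{l+1}`. The product rule,
applied from the top layer down, gives `dŷ/dt = ∑_l P_l Ẇ_l Q_{l-1} x` with `Q_{l-1} x = x̂_{l-1}`.
For the adaptive update `Ẇ_l = α_l P_lᵀ S̃⁻¹ r x*_lᵀ` the factor `x*_lᵀ x̂_{l-1}` cancels against
`α_l`, so the `l`-th summand is `P_l P_lᵀ S̃⁻¹ r`, and the sum is `S̃ S̃⁻¹ r = r`.
-/

open Matrix

variable {𝕜 : Type*} [NontriviallyNormedField 𝕜] {n : Type*} [Fintype n]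

theorem hasDerivAt_matrix_mul_apply {l p : Type*} {A : 𝕜 → Matrix l n 𝕜}
    {B : 𝕜 → Matrix n p 𝕜} {A' : Matrix l n 𝕜} {B' : Matrix n p 𝕜} {t₀ : 𝕜}
    (hA : ∀ i j, HasDerivAt (fun t => A t i j) (A' i j) t₀)
    (hB : ∀ i j, HasDerivAt (fun t => B t i j) (B' i j) t₀) (i : l) (j : p) :
    HasDerivAt (fun t => (A t * B t) i j) ((A' * B t₀ + A t₀ * B') i j) t₀ := by
  simpa only [mul_apply, Matrix.add_apply, Pi.mul_apply, Finset.sum_add_distrib] using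
    HasDerivAt.fun_sum (u := Finset.univ) fun k _ => (hA i k).mul (hB k j)

theorem hasDerivAt_mulVec {m : Type*} [Fintype m] {A : 𝕜 → Matrix m n 𝕜} {A' : Matrix m n 𝕜}
    {t₀ : 𝕜} (hA : ∀ i j, HasDerivAt (fun t => A t i j) (A' i j) t₀) (v : n → 𝕜) :
    HasDerivAt (fun t => A t *ᵥ v) (A' *ᵥ v) t₀ := by
  refine hasDerivAt_pi.2 fun i => ?_
  simp only [mulVec, dotProduct]
  exact HasDerivAt.fun_sum fun j _ => (hA i j).mul_const (v j)

theorem inv_dotProduct_smul_mul_vecMulVec_mulVec {m : Type*} (M : Matrix m n 𝕜)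
    {r w v : n → 𝕜} (h : w ⬝ᵥ v ≠ 0) :
    ((w ⬝ᵥ v)⁻¹ • (M * vecMulVec r w)) *ᵥ v = M *ᵥ r := by
  rw [smul_mulVec, ← mulVec_mulVec, vecMulVec_mulVec, op_smul_eq_smul, mulVec_smul, smul_smul,
    inv_mul_cancel₀ h, one_smul]

theorem exists_hasDerivAt_resNet_suffix [DecidableEq n] {K : ℕ}
    {W P Q : ℕ → 𝕜 → Matrix n n 𝕜} {W' : ℕ → Matrix n n 𝕜} {t₀ : 𝕜}
    (hPtop : ∀ t, P K t = 1) (hP : ∀ t, ∀ l < K, P l t = P (l + 1) t * (1 + W (l + 1) t))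
    (hQ : ∀ l, 1 ≤ l → l ≤ K → Q l t₀ = (1 + W l t₀) * Q (l - 1) t₀)
    (hW : ∀ l, 1 ≤ l → l ≤ K → ∀ i j, HasDerivAt (fun t => W l t i j) (W' l i j) t₀)
    {l : ℕ} (hl : l ≤ K) :
    ∃ D : Matrix n n 𝕜, (∀ i j, HasDerivAt (fun t => P l t i j) (D i j) t₀) ∧
      D * Q l t₀ = ∑ k ∈ Finset.Icc (l + 1) K, P k t₀ * W' k * Q (k - 1) t₀ := by
  induction hl using Nat.decreasingInduction with
  | self =>
    refine ⟨0, fun i j => ?_, by simp⟩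
    simpa only [hPtop, Matrix.zero_apply] using hasDerivAt_const t₀ ((1 : Matrix n n 𝕜) i j)
  | of_succ l hlK ih =>
    obtain ⟨D, hD, hDQ⟩ := ih
    have hA : ∀ i j, HasDerivAt (fun t => (1 + W (l + 1) t) i j) (W' (l + 1) i j) t₀ :=
      fun i j => (hW (l + 1) (by omega) hlK i j).const_add _
    have hQl : Q (l + 1) t₀ = (1 + W (l + 1) t₀) * Q l t₀ := hQ (l + 1) (by omega) hlK
    refine ⟨D * (1 + W (l + 1) t₀) + P (l + 1) t₀ * W' (l + 1), fun i j => ?_, ?_⟩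
    · simp only [hP _ l hlK]
      exact hasDerivAt_matrix_mul_apply hD hA i j
    · rw [← Finset.insert_Icc_add_one_left_eq_Icc hlK, Finset.sum_insert (by simp), add_mul,
        Matrix.mul_assoc, ← hQl, hDQ, Nat.add_sub_cancel, add_comm]

theorem stmt19_general
    (L N : ℕ)
    (W : ℕ → ℝ → Matrix (Fin N) (Fin N) ℝ)
    (P Q : ℕ → ℝ → Matrix (Fin N) (Fin N) ℝ)
    (hPtop : ∀ t : ℝ, P (L - 1) t = 1)
    (hP : ∀ t : ℝ, ∀ l : ℕ, l < L - 1 → P l t = P (l + 1) t * (1 + W (l + 1) t))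
    (hQ0 : ∀ t : ℝ, Q 0 t = 1)
    (hQ : ∀ t : ℝ, ∀ l : ℕ, 1 ≤ l → l ≤ L - 1 → Q l t = (1 + W l t) * Q (l - 1) t)
    (x y : Fin N → ℝ) (t₀ : ℝ)
    (xs : ℕ → Fin N → ℝ)
    (hS : IsUnit (∑ k ∈ Finset.Icc 1 (L - 1), P k t₀ * (P k t₀)ᵀ).det)
    (hne : ∀ l : ℕ, 1 ≤ l → l ≤ L - 1 → xs l ⬝ᵥ (Q (l - 1) t₀ *ᵥ x) ≠ 0)
    (hW : ∀ l : ℕ, 1 ≤ l → l ≤ L - 1 → ∀ i j, HasDerivAt (fun t => W l t i j)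
      ((xs l ⬝ᵥ (Q (l - 1) t₀ *ᵥ x))⁻¹ •
        (((P l t₀)ᵀ * ((∑ k ∈ Finset.Icc 1 (L - 1), P k t₀ * (P k t₀)ᵀ)⁻¹ *
          vecMulVec (y - P 0 t₀ *ᵥ x) (xs l))) i j)) t₀) :
    HasDerivAt (fun t => P 0 t *ᵥ x) (y - P 0 t₀ *ᵥ x) t₀ := by
  set S := ∑ k ∈ Finset.Icc 1 (L - 1), P k t₀ * (P k t₀)ᵀ
  set r := y - P 0 t₀ *ᵥ x
  set W' : ℕ → Matrix (Fin N) (Fin N) ℝ :=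
    fun l => (xs l ⬝ᵥ (Q (l - 1) t₀ *ᵥ x))⁻¹ • ((P l t₀)ᵀ * (S⁻¹ * vecMulVec r (xs l)))
  obtain ⟨D, hD, hDQ⟩ := exists_hasDerivAt_resNet_suffix (W' := W')
    hPtop hP (hQ t₀) hW (Nat.zero_le (L - 1))
  rw [hQ0, Matrix.mul_one] at hDQ
  have hterm : ∀ k ∈ Finset.Icc 1 (L - 1),
      (P k t₀ * W' k * Q (k - 1) t₀) *ᵥ x = (P k t₀ * (P k t₀)ᵀ) *ᵥ (S⁻¹ *ᵥ r) := by
    intro k hk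
    obtain ⟨hk_one, hk_top⟩ := Finset.mem_Icc.1 hk
    rw [← mulVec_mulVec, ← mulVec_mulVec]
    simp only [W', ← Matrix.mul_assoc]
    rw [inv_dotProduct_smul_mul_vecMulVec_mulVec _ (hne k hk_one hk_top)]
    simp only [mulVec_mulVec, Matrix.mul_assoc]
  have hD_x : D *ᵥ x = r := by
    rw [hDQ, sum_mulVec, Finset.sum_congr rfl hterm, ← sum_mulVec, mulVec_mulVec,
      mul_nonsing_inv S hS, one_mulVec]
  simpa only [hD_x] using hasDerivAt_mulVec hD x

/-- **Perfect alignment for ResNets with adaptive learning rates.**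
Suppose each weight matrix `W_l(t)` of a linear residual network evolves as
`dW_l/dt = α_l W̃_{L−1:l+1}ᵀ S̃⁻¹ r x*_lᵀ` with layer-specific learning rates
`α_l = (x*_lᵀ x̂_{l−1})⁻¹`, where `x*_lᵀ x̂_{l−1} ≠ 0` for every `l = 1, …, L−1`.
Then the change in the model prediction is exactly the output residual:
`dŷ/dt = r`.
Here `P l t = W̃_{L−1:l+1}(t)`, `Q l t = W̃_{l:1}(t)`, `x̂_l = W̃_{l:1} x`,
`r = y − ŷ`, and `S̃ = ∑_{k=1}^{L−1} W̃_{L−1:k+1} W̃_{L−1:k+1}ᵀ` (invertible). -/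
theorem stmt19
    (L N : ℕ) (hL : 2 ≤ L)
    (W : ℕ → ℝ → Matrix (Fin N) (Fin N) ℝ)
    (P Q : ℕ → ℝ → Matrix (Fin N) (Fin N) ℝ)
    (hPtop : ∀ t : ℝ, P (L - 1) t = 1)
    (hP : ∀ t : ℝ, ∀ l : ℕ, l < L - 1 → P l t = P (l + 1) t * (1 + W (l + 1) t))
    (hQ0 : ∀ t : ℝ, Q 0 t = 1)
    (hQ : ∀ t : ℝ, ∀ l : ℕ, 1 ≤ l → l ≤ L - 1 → Q l t = (1 + W l t) * Q (l - 1) t)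
    (x y : Fin N → ℝ) (t₀ : ℝ)
    (xs : ℕ → Fin N → ℝ)
    (hS : IsUnit (∑ k ∈ Finset.Icc 1 (L - 1), P k t₀ * (P k t₀)ᵀ).det)
    (hne : ∀ l : ℕ, 1 ≤ l → l ≤ L - 1 → xs l ⬝ᵥ (Q (l - 1) t₀ *ᵥ x) ≠ 0)
    (hW : ∀ l : ℕ, 1 ≤ l → l ≤ L - 1 → ∀ i j, HasDerivAt (fun t => W l t i j)
      ((xs l ⬝ᵥ (Q (l - 1) t₀ *ᵥ x))⁻¹ •
        (((P l t₀)ᵀ * ((∑ k ∈ Finset.Icc 1 (L - 1), P k t₀ * (P k t₀)ᵀ)⁻¹ *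
          vecMulVec (y - P 0 t₀ *ᵥ x) (xs l))) i j)) t₀) :
    HasDerivAt (fun t => P 0 t *ᵥ x) (y - P 0 t₀ *ᵥ x) t₀ :=
  stmt19_general L N W P Q hPtop hP hQ0 hQ x y t₀ xs hS hne hW
end
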